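/- arXiv:1405.6076 — 3 statements merged into one kernel-verified Lean document; each statement's English description precedes it below -/
import Mathlib

section
/- Let Φ_0, Φ_1, …, Φ_T : ℝ^N → ℝ be differentiable functions with Φ_0(0) = 0, let θ_1, …, θ_T ∈ ℝ^N, and set Θ_0 = 0 and Θ_t = θ_1 + ⋯ + θ_t. Then the Gradient-Based Prediction Algorithm regret satisfies the identity Φ_0(Θ_T) − Σ_{t=1}^T ⟨∇Φ_t(Θ_{t−1}), θ_t⟩ = (Φ_0(Θ_T) − Φ_T(Θ_T)) + Σ_{t=1}^T [ (Φ_t(Θ_{t−1}) − Φ_{t−1}(Θ_{t−1})) + D_{Φ_t}(Θ_t, Θ_{t−1}) ], where D_{Φ_t}(y,x) = Φ_t(y) − Φ_t(x) − ⟨∇Φ_t(x), y − x⟩ is the Bregman divergence. -/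
/-!
Since `Θ t - Θ (t - 1) = θ t`, the overestimation and divergence penalties of round `t` add up to
`Φ t (Θ t) - Φ (t - 1) (Θ (t - 1)) - ⟪∇Φ t (Θ (t - 1)), θ t⟫`. Summed over the rounds, the first
part telescopes to `Φ T (Θ T) - Φ 0 0 = Φ T (Θ T)`, which leaves exactly the regret.
-/

open scoped RealInnerProductSpace
open Finset

theorem Finset.sum_Icc_one_sub_pred {M : Type*} [AddCommGroup M] (f : ℕ → M) (T : ℕ) :
    ∑ t ∈ Icc 1 T, (f t - f (t - 1)) = f T - f 0 := by
  induction T with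
  | zero => simp
  | succ T ih =>
    rw [sum_Icc_succ_top (by omega), ih, Nat.add_sub_cancel]
    abel

theorem sub_pred_eq_of_eq_sum_Icc {M : Type*} [AddCommGroup M] {θ Θ : ℕ → M}
    (hΘ : ∀ t, Θ t = ∑ s ∈ Icc 1 t, θ s) {t : ℕ} (ht : 1 ≤ t) : Θ t - Θ (t - 1) = θ t := by
  obtain ⟨n, rfl⟩ : ∃ n, t = n + 1 := ⟨t - 1, by omega⟩
  rw [hΘ, hΘ, sum_Icc_succ_top ht, Nat.add_sub_cancel, add_sub_cancel_left]

theorem gbpa_regret_decomposition_general {N : ℕ} (T : ℕ)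
    (Φ : ℕ → EuclideanSpace ℝ (Fin N) → ℝ)
    (hΦ0 : Φ 0 0 = 0)
    (θ Θ : ℕ → EuclideanSpace ℝ (Fin N))
    (hΘ0 : Θ 0 = 0) (hΘ : ∀ t, Θ t = ∑ s ∈ Finset.Icc 1 t, θ s) :
    Φ 0 (Θ T) - ∑ t ∈ Finset.Icc 1 T, ⟪gradient (Φ t) (Θ (t - 1)), θ t⟫ =
      (Φ 0 (Θ T) - Φ T (Θ T)) +
        ∑ t ∈ Finset.Icc 1 T,
          ((Φ t (Θ (t - 1)) - Φ (t - 1) (Θ (t - 1))) +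
            (Φ t (Θ t) - Φ t (Θ (t - 1)) -
              ⟪gradient (Φ t) (Θ (t - 1)), Θ t - Θ (t - 1)⟫)) := by
  have hround : ∀ t ∈ Icc 1 T,
      (Φ t (Θ (t - 1)) - Φ (t - 1) (Θ (t - 1))) +
          (Φ t (Θ t) - Φ t (Θ (t - 1)) - ⟪gradient (Φ t) (Θ (t - 1)), Θ t - Θ (t - 1)⟫) =
        (Φ t (Θ t) - Φ (t - 1) (Θ (t - 1))) - ⟪gradient (Φ t) (Θ (t - 1)), θ t⟫ := by
    intro t ht
    rw [sub_pred_eq_of_eq_sum_Icc hΘ (mem_Icc.1 ht).1]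
    ring
  rw [sum_congr rfl hround, sum_sub_distrib, sum_Icc_one_sub_pred (fun t ↦ Φ t (Θ t)), hΘ0, hΦ0]
  ring

/-- GBPA regret decomposition (Lemma 2 of the paper): the regret equals the
underestimation penalty plus the sum of overestimation and divergence penalties. -/
theorem gbpa_regret_decomposition {N : ℕ} (T : ℕ)
    (Φ : ℕ → EuclideanSpace ℝ (Fin N) → ℝ)
    (hdiff : ∀ t, Differentiable ℝ (Φ t)) (hΦ0 : Φ 0 0 = 0)
    (θ Θ : ℕ → EuclideanSpace ℝ (Fin N))
    (hΘ0 : Θ 0 = 0) (hΘ : ∀ t, Θ t = ∑ s ∈ Finset.Icc 1 t, θ s) :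
    Φ 0 (Θ T) - ∑ t ∈ Finset.Icc 1 T, ⟪gradient (Φ t) (Θ (t - 1)), θ t⟫ =
      (Φ 0 (Θ T) - Φ T (Θ T)) +
        ∑ t ∈ Finset.Icc 1 T,
          ((Φ t (Θ (t - 1)) - Φ (t - 1) (Θ (t - 1))) +
            (Φ t (Θ t) - Φ t (Θ (t - 1)) -
              ⟪gradient (Φ t) (Θ (t - 1)), Θ t - Θ (t - 1)⟫)) :=
  gbpa_regret_decomposition_general T Φ hΦ0 θ Θ hΘ0 hΘ
end

section
/- Let R : [0,1] → ℝ be a differentiable strictly convex function with R(0) = 0. Then there exists a Borel probability measure μ on ℝ such that for every Θ ∈ ℝ, max_{w ∈ [0,1]} (wΘ − R(w)) = ∫ max(Θ + u, 0) dμ(u); that is, the Follow-the-Regularized-Leader potential with regularizer R coincides with the Follow-the-Perturbed-Leader potential with perturbation distribution μ for the one-dimensional problem with decision set [0,1]. -/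
/-! Take for `μ` the law of `-R'(W)` with `W` uniform on `[0,1]`, so that
`∫ max (Θ + u) 0 ∂μ = ∫₀¹ (Θ - R' t)⁺ dt`. By the fundamental theorem of calculus
`w Θ - R w = ∫₀ʷ (Θ - R' t) dt`, and since `R'` is monotone by convexity the integrand is
nonnegative up to some threshold and nonpositive beyond it; the maximum over `w` is attained at
the threshold, where it equals the integral of the positive part. -/

open MeasureTheory Set

section

variable {a b : ℝ}

theorem AntitoneOn.exists_nonneg_on_Ico_nonpos_on_Ioc {g : ℝ → ℝ} (hg : AntitoneOn g (Icc a b))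
    (hab : a ≤ b) : ∃ c ∈ Icc a b, (∀ t ∈ Ico a c, 0 ≤ g t) ∧ ∀ t ∈ Ioc c b, g t ≤ 0 := by
  set T := insert a {t ∈ Icc a b | 0 ≤ g t}
  have hT_le : ∀ t ∈ T, t ≤ b := by
    rintro t (rfl | ht)
    exacts [hab, ht.1.2]
  have hT_bdd : BddAbove T := ⟨b, hT_le⟩
  have ha : a ≤ sSup T := le_csSup hT_bdd (mem_insert a _)
  refine ⟨sSup T, ⟨ha, csSup_le (insert_nonempty a _) hT_le⟩, fun t ht => ?_, fun t ht => ?_⟩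
  · obtain ⟨s, hsT, hts⟩ := exists_lt_of_lt_csSup (insert_nonempty a _) ht.2
    rcases hsT with rfl | hs
    · exact absurd ht.1 hts.not_ge
    · exact hs.2.trans (hg ⟨ht.1, hts.le.trans hs.1.2⟩ hs.1 hts.le)
  · by_contra! hpos
    exact ht.1.not_ge (le_csSup hT_bdd (mem_insert_of_mem a ⟨⟨ha.trans ht.1.le, ht.2⟩, hpos.le⟩))

theorem AntitoneOn.isGreatest_intervalIntegral {g : ℝ → ℝ} (hg : AntitoneOn g (Icc a b))
    (hab : a ≤ b) :
    IsGreatest ((fun w => ∫ t in a..w, g t) '' Icc a b) (∫ t in a..b, max (g t) 0) := by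
  have hg_pos : AntitoneOn (fun t => max (g t) 0) (Icc a b) :=
    fun x hx y hy hxy => max_le_max (hg hx hy hxy) le_rfl
  have hint {x y : ℝ} (hx : x ∈ Icc a b) (hy : y ∈ Icc a b) :
      IntervalIntegrable g volume x y ∧ IntervalIntegrable (fun t => max (g t) 0) volume x y :=
    ⟨(hg.mono (uIcc_subset_Icc hx hy)).intervalIntegrable,
      (hg_pos.mono (uIcc_subset_Icc hx hy)).intervalIntegrable⟩
  have ha : a ∈ Icc a b := left_mem_Icc.2 hab
  have hb : b ∈ Icc a b := right_mem_Icc.2 hab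
  obtain ⟨c, hc, hnonneg, hnonpos⟩ := hg.exists_nonneg_on_Ico_nonpos_on_Ioc hab
  refine ⟨⟨c, hc, ?_⟩, ?_⟩
  · dsimp only
    have hpos_eq : ∫ t in a..c, g t = ∫ t in a..c, max (g t) 0 := by
      rw [intervalIntegral.integral_of_le hc.1, intervalIntegral.integral_of_le hc.1,
        integral_Ioc_eq_integral_Ioo, integral_Ioc_eq_integral_Ioo]
      exact setIntegral_congr_fun measurableSet_Ioo
        fun t ht => (max_eq_left (hnonneg t (Ioo_subset_Ico_self ht))).symm
    have hzero : ∫ t in c..b, max (g t) 0 = 0 := by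
      rw [intervalIntegral.integral_of_le hc.2]
      exact setIntegral_eq_zero_of_forall_eq_zero fun t ht => max_eq_right (hnonpos t ht)
    rw [hpos_eq, ← intervalIntegral.integral_add_adjacent_intervals (hint ha hc).2 (hint hc hb).2,
      hzero, add_zero]
  · rintro _ ⟨w, hw, rfl⟩
    calc ∫ t in a..w, g t ≤ ∫ t in a..w, max (g t) 0 :=
          intervalIntegral.integral_mono_on hw.1 (hint ha hw).1 (hint ha hw).2
            fun t _ => le_max_left _ _
      _ ≤ ∫ t in a..b, max (g t) 0 :=
          intervalIntegral.integral_mono_interval le_rfl hw.1 hw.2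
            (ae_of_all _ fun t => le_max_right _ _) (hint ha hb).2

theorem integral_derivWithin_Icc_eq_sub {f : ℝ → ℝ} (hf : DifferentiableOn ℝ f (Icc a b))
    (hint : IntervalIntegrable (derivWithin f (Icc a b)) volume a b) {x : ℝ} (hx : x ∈ Icc a b) :
    ∫ t in a..x, derivWithin f (Icc a b) t = f x - f a :=
  intervalIntegral.integral_eq_sub_of_hasDerivAt_of_le hx.1
    (hf.continuousOn.mono (Icc_subset_Icc_right hx.2))
    (fun t ht => ((hf t (Ioo_subset_Icc_self (Ioo_subset_Ioo_right hx.2 ht))).hasDerivWithinAt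
      ).hasDerivAt (Icc_mem_nhds ht.1 (ht.2.trans_le hx.2)))
    (hint.mono_set (uIcc_subset_uIcc_left (Icc_subset_uIcc hx)))

theorem integrable_and_integral_max_add_map_neg {d : ℝ → ℝ} (hd : MonotoneOn d (Icc a b))
    (hab : a ≤ b) (Θ : ℝ) :
    Integrable (fun u => max (Θ + u) 0) ((volume.restrict (Icc a b)).map (fun w => -d w)) ∧
      ∫ u, max (Θ + u) 0 ∂(volume.restrict (Icc a b)).map (fun w => -d w) =
        ∫ t in a..b, max (Θ - d t) 0 := by
  have hd_meas : AEMeasurable (fun w => -d w) (volume.restrict (Icc a b)) :=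
    (aemeasurable_restrict_of_monotoneOn measurableSet_Icc hd).neg
  have hφ : Continuous fun u : ℝ => max (Θ + u) 0 := by fun_prop
  have hanti : AntitoneOn (fun t => max (Θ - d t) 0) (Icc a b) :=
    fun x hx y hy hxy => max_le_max (sub_le_sub_left (hd hx hy hxy) Θ) le_rfl
  refine ⟨?_, ?_⟩
  · rw [integrable_map_measure hφ.aestronglyMeasurable hd_meas]
    exact hanti.integrableOn_isCompact isCompact_Icc
  · rw [integral_map hd_meas hφ.aestronglyMeasurable, intervalIntegral.integral_of_le hab,
      ← integral_Icc_eq_integral_Ioc]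
    rfl

end

/-- FTRL-to-FTPL direction of the one-dimensional duality (Theorem 4 of the paper):
any differentiable strictly convex regularizer on [0,1] is realized by a perturbation
distribution. -/
theorem ftrl_to_ftpl_one_dim (R : ℝ → ℝ)
    (hconv : StrictConvexOn ℝ (Set.Icc 0 1) R)
    (hdiff : DifferentiableOn ℝ R (Set.Icc 0 1)) (hR0 : R 0 = 0) :
    ∃ μ : Measure ℝ, IsProbabilityMeasure μ ∧
      ∀ Θ : ℝ, Integrable (fun u => max (Θ + u) 0) μ ∧
        sSup ((fun w => w * Θ - R w) '' Set.Icc (0:ℝ) 1) = ∫ u, max (Θ + u) 0 ∂μ := by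
  set d := derivWithin R (Icc 0 1)
  have hd : MonotoneOn d (Icc 0 1) := hconv.convexOn.monotoneOn_derivWithin hdiff
  have : IsProbabilityMeasure (volume.restrict (Icc (0:ℝ) 1)) := ⟨by simp⟩
  refine ⟨(volume.restrict (Icc 0 1)).map (fun w => -d w),
    Measure.isProbabilityMeasure_map (aemeasurable_restrict_of_monotoneOn measurableSet_Icc hd).neg,
    fun Θ => ?_⟩
  obtain ⟨hint, hintegral⟩ := integrable_and_integral_max_add_map_neg hd zero_le_one Θ
  refine ⟨hint, hintegral ▸ ?_⟩
  have hd_int : IntervalIntegrable d volume 0 1 :=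
    MonotoneOn.intervalIntegrable (by rwa [uIcc_of_le zero_le_one])
  have hpotential : EqOn (fun w => ∫ t in 0..w, (Θ - d t)) (fun w => w * Θ - R w) (Icc 0 1) := by
    intro w hw
    dsimp only
    rw [intervalIntegral.integral_sub intervalIntegrable_const
        (hd_int.mono_set (uIcc_subset_uIcc_left (Icc_subset_uIcc hw))),
      intervalIntegral.integral_const, integral_derivWithin_Icc_eq_sub hdiff hd_int hw, hR0]
    simp [mul_comm]
  have hanti : AntitoneOn (fun t => Θ - d t) (Icc 0 1) :=
    fun x hx y hy hxy => sub_le_sub_left (hd hx hy hxy) Θ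
  rw [← hpotential.image_eq]
  exact (hanti.isGreatest_intervalIntegral zero_le_one).csSup_eq
end

section
/- Let μ be a Borel probability measure on ℝ with a continuous, strictly increasing cumulative distribution function F : ℝ → (0,1) and finite first moment ∫|u| dμ(u) < ∞. Define R : [0,1] → ℝ by R(w) = −∫_0^w F^{−1}(1−z) dz. Then R is convex, and for every Θ ∈ ℝ, max_{w ∈ [0,1]} (wΘ − R(w)) = ∫ max(Θ + u, 0) dμ(u); moreover the maximum is attained at w = 1 − F(−Θ). -/
/-!
Put `q z = F⁻¹(1 - z)`. On `(0,1)` we have `q z ≤ x ↔ 1 - z ≤ F x`, so `q` is antitone and pushes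
the uniform distribution on `(0,1)` forward to `μ`: this is the quantile transform. Hence `q` is
integrable and `∫ max(Θ + u, 0) dμ = ∫₀¹ max(Θ + q z, 0) dz`. On the other hand
`wΘ - R(w) = ∫₀ʷ (Θ + q z) dz`. The integrand `Θ + q` is antitone, which makes `R` convex, and it
changes sign exactly at `w = 1 - F(-Θ)`, so there the integral is maximal and equals
`∫₀¹ max(Θ + q z, 0) dz`.
-/

open MeasureTheory ProbabilityTheory Set

lemma IntervalIntegrable.mono_set_Icc {f : ℝ → ℝ} {μ : Measure ℝ} {a b c d : ℝ}
    (hf : IntervalIntegrable f μ a b) (hc : c ∈ Icc a b) (hd : d ∈ Icc a b) :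
    IntervalIntegrable f μ c d :=
  hf.mono_set (uIcc_subset_uIcc (Icc_subset_uIcc hc) (Icc_subset_uIcc hd))

lemma MonotoneOn.convexOn_intervalIntegral {f : ℝ → ℝ} {a b : ℝ} (hf : MonotoneOn f (Ioo a b))
    (hint : IntervalIntegrable f volume a b) :
    ConvexOn ℝ (Icc a b) (fun x => ∫ t in a..x, f t) := by
  refine convexOn_of_slope_mono_adjacent (convex_Icc a b) fun {x y z} hx hz hxy hyz => ?_
  have ha : a ∈ Icc a b := left_mem_Icc.2 (hx.1.trans hx.2)
  have hy : y ∈ Ioo a b := ⟨hx.1.trans_lt hxy, hyz.trans_le hz.2⟩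
  have hy' : y ∈ Icc a b := Ioo_subset_Icc_self hy
  have hleft : ∫ t in x..y, f t ≤ (y - x) * f y := by
    simpa using intervalIntegral.integral_mono_on_of_le_Ioo hxy.le (hint.mono_set_Icc hx hy')
      intervalIntegrable_const fun t ht => hf ⟨hx.1.trans_lt ht.1, ht.2.trans hy.2⟩ hy ht.2.le
  have hright : (z - y) * f y ≤ ∫ t in y..z, f t := by
    simpa using intervalIntegral.integral_mono_on_of_le_Ioo hyz.le intervalIntegrable_const
      (hint.mono_set_Icc hy' hz) fun t ht => hf hy ⟨hy.1.trans ht.1, ht.2.trans_le hz.2⟩ ht.1.le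
  rw [intervalIntegral.integral_interval_sub_left (hint.mono_set_Icc ha hy')
      (hint.mono_set_Icc ha hx),
    intervalIntegral.integral_interval_sub_left (hint.mono_set_Icc ha hz)
      (hint.mono_set_Icc ha hy')]
  calc (∫ t in x..y, f t) / (y - x) ≤ f y := (div_le_iff₀' (sub_pos.2 hxy)).2 hleft
    _ ≤ (∫ t in y..z, f t) / (z - y) := (le_div_iff₀' (sub_pos.2 hyz)).2 hright

section SignChange

variable {g : ℝ → ℝ} {a b w : ℝ}

lemma intervalIntegral_le_of_sign_change (hg : IntervalIntegrable g volume a b)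
    (hw : w ∈ Icc a b) (hsign : ∀ z ∈ Ioo a b, g z ≤ 0 ↔ w ≤ z) {v : ℝ} (hv : v ∈ Icc a b) :
    ∫ z in a..v, g z ≤ ∫ z in a..w, g z := by
  have ha : a ∈ Icc a b := left_mem_Icc.2 (hw.1.trans hw.2)
  rw [← intervalIntegral.integral_add_adjacent_intervals (hg.mono_set_Icc ha hv)
    (hg.mono_set_Icc hv hw), le_add_iff_nonneg_right]
  rcases le_total v w with hvw | hwv
  · simpa using intervalIntegral.integral_mono_on_of_le_Ioo hvw intervalIntegrable_const
      (hg.mono_set_Icc hv hw) fun z hz => le_of_lt <| not_le.1 fun h =>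
        hz.2.not_ge ((hsign z ⟨hv.1.trans_lt hz.1, hz.2.trans_le hw.2⟩).1 h)
  · rw [intervalIntegral.integral_symm, neg_nonneg]
    simpa using intervalIntegral.integral_mono_on_of_le_Ioo hwv (hg.mono_set_Icc hw hv)
      intervalIntegrable_const fun z hz =>
        (hsign z ⟨hw.1.trans_lt hz.1, hz.2.trans_le hv.2⟩).2 hz.1.le

lemma intervalIntegral_max_zero_eq_of_sign_change (hg : IntervalIntegrable g volume a b)
    (hw : w ∈ Icc a b) (hsign : ∀ z ∈ Ioo a b, g z ≤ 0 ↔ w ≤ z) :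
    ∫ z in a..b, max (g z) 0 = ∫ z in a..w, g z := by
  have hg' : IntervalIntegrable (fun z => max (g z) 0) volume a b := by
    rw [intervalIntegrable_iff] at hg ⊢
    exact hg.pos_part
  rw [← intervalIntegral.integral_add_adjacent_intervals
      (hg'.mono_set_Icc (left_mem_Icc.2 (hw.1.trans hw.2)) hw)
      (hg'.mono_set_Icc hw (right_mem_Icc.2 (hw.1.trans hw.2))),
    intervalIntegral.integral_congr_Ioo_of_le hw.1 fun z hz => max_eq_left <| le_of_lt <|
      not_le.1 fun h => hz.2.not_ge ((hsign z ⟨hz.1, hz.2.trans_le hw.2⟩).1 h),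
    intervalIntegral.integral_congr_Ioo_of_le hw.2 (g := fun _ => 0) fun z hz =>
      max_eq_right ((hsign z ⟨hw.1.trans_lt hz.1, hz.2⟩).2 hz.1.le)]
  simp

end SignChange

section Quantile

variable {μ : Measure ℝ} {q : ℝ → ℝ}

lemma antitoneOn_of_le_iff_cdf (hq : ∀ z ∈ Ioo (0:ℝ) 1, ∀ x, q z ≤ x ↔ 1 - z ≤ cdf μ x) :
    AntitoneOn q (Ioo 0 1) := fun z hz z' hz' hzz' =>
  (hq z' hz' (q z)).2 (by linarith [(hq z hz (q z)).1 le_rfl])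

lemma map_restrict_Ioo_of_le_iff_cdf [IsProbabilityMeasure μ]
    (hq : ∀ z ∈ Ioo (0:ℝ) 1, ∀ x, q z ≤ x ↔ 1 - z ≤ cdf μ x) :
    (volume.restrict (Ioo (0:ℝ) 1)).map q = μ := by
  have hmeas : AEMeasurable q (volume.restrict (Ioo (0:ℝ) 1)) :=
    aemeasurable_restrict_of_antitoneOn measurableSet_Ioo (antitoneOn_of_le_iff_cdf hq)
  refine Measure.ext_of_Iic _ _ fun x => ?_
  have hset : q ⁻¹' Iic x ∩ Ioo 0 1 = Ioo 0 1 \ Ioo 0 (1 - cdf μ x) := by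
    ext z
    simp only [mem_inter_iff, mem_preimage, mem_Iic, mem_sdiff, mem_Ioo, not_and, not_lt]
    constructor
    · rintro ⟨hqz, hz⟩
      exact ⟨hz, fun _ => by linarith [(hq z hz x).1 hqz]⟩
    · rintro ⟨hz, hzc⟩
      exact ⟨(hq z hz x).2 (by linarith [hzc hz.1]), hz⟩
  have hc : 1 - cdf μ x ≤ 1 := by linarith [cdf_nonneg μ x]
  rw [Measure.map_apply_of_aemeasurable hmeas measurableSet_Iic,
    Measure.restrict_apply' measurableSet_Ioo, hset,
    measure_sdiff (Ioo_subset_Ioo_right hc) measurableSet_Ioo.nullMeasurableSet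
      measure_Ioo_lt_top.ne,
    Real.volume_Ioo, Real.volume_Ioo, ← ENNReal.ofReal_sub _ (by linarith [cdf_le_one μ x]),
    ← ofReal_cdf]
  ring_nf

lemma integrableOn_of_le_iff_cdf [IsProbabilityMeasure μ]
    (hq : ∀ z ∈ Ioo (0:ℝ) 1, ∀ x, q z ≤ x ↔ 1 - z ≤ cdf μ x) (hμ : Integrable id μ) :
    IntegrableOn q (Ioo 0 1) := by
  rw [← map_restrict_Ioo_of_le_iff_cdf hq] at hμ
  exact (integrable_map_measure aestronglyMeasurable_id
    (aemeasurable_restrict_of_antitoneOn measurableSet_Ioo (antitoneOn_of_le_iff_cdf hq))).1 hμ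

lemma integral_eq_setIntegral_comp_of_le_iff_cdf [IsProbabilityMeasure μ]
    (hq : ∀ z ∈ Ioo (0:ℝ) 1, ∀ x, q z ≤ x ↔ 1 - z ≤ cdf μ x) {g : ℝ → ℝ}
    (hg : AEStronglyMeasurable g μ) :
    ∫ u, g u ∂μ = ∫ z in Ioo 0 1, g (q z) := by
  rw [← map_restrict_Ioo_of_le_iff_cdf hq] at hg ⊢
  exact integral_map
    (aemeasurable_restrict_of_antitoneOn measurableSet_Ioo (antitoneOn_of_le_iff_cdf hq)) hg

end Quantile

theorem ftpl_to_ftrl_one_dim_general (μ : Measure ℝ) [IsProbabilityMeasure μ]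
    (F Finv : ℝ → ℝ)
    (hF : ∀ x, F x = (μ (Set.Iic x)).toReal)
    (hFmono : StrictMono F)
    (hFFinv : ∀ y ∈ Set.Ioo (0:ℝ) 1, F (Finv y) = y)
    (hmoment : Integrable (fun u => |u|) μ)
    (R : ℝ → ℝ) (hR : ∀ w, R w = -∫ z in (0:ℝ)..w, Finv (1 - z)) :
    ConvexOn ℝ (Set.Icc 0 1) R ∧
      ∀ Θ : ℝ,
        IsGreatest ((fun w => w * Θ - R w) '' Set.Icc (0:ℝ) 1)
          (∫ u, max (Θ + u) 0 ∂μ) ∧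
        (1 - F (-Θ)) * Θ - R (1 - F (-Θ)) = ∫ u, max (Θ + u) 0 ∂μ := by
  obtain rfl : F = cdf μ := funext fun x => by rw [hF, cdf_eq_real, measureReal_def]
  set q : ℝ → ℝ := fun z => Finv (1 - z)
  have hq : ∀ z ∈ Ioo (0:ℝ) 1, ∀ x, q z ≤ x ↔ 1 - z ≤ cdf μ x := fun z hz x => by
    rw [← hFmono.le_iff_le, hFFinv _ ⟨by linarith [hz.2], by linarith [hz.1]⟩]
  have hqint : IntervalIntegrable q volume 0 1 :=
    (intervalIntegrable_iff_integrableOn_Ioo_of_le zero_le_one).2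
      (integrableOn_of_le_iff_cdf hq ((integrable_norm_iff aestronglyMeasurable_id).1 hmoment))
  refine ⟨?_, fun Θ => ?_⟩
  · have hRq : R = fun w => ∫ z in (0:ℝ)..w, -q z :=
      funext fun w => by rw [hR, intervalIntegral.integral_neg]
    rw [hRq]
    exact (antitoneOn_of_le_iff_cdf hq).neg.convexOn_intervalIntegral hqint.neg
  set w := 1 - cdf μ (-Θ)
  have hw : w ∈ Icc 0 1 := ⟨by linarith [cdf_le_one μ (-Θ)], by linarith [cdf_nonneg μ (-Θ)]⟩
  have hgint : IntervalIntegrable (fun z => Θ + q z) volume 0 1 :=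
    intervalIntegrable_const.add hqint
  have hsign : ∀ z ∈ Ioo (0:ℝ) 1, Θ + q z ≤ 0 ↔ w ≤ z := fun z hz => by
    rw [← le_neg_iff_add_nonpos_left, hq z hz]
    constructor <;> intro h <;> linarith
  have hobj : ∀ v ∈ Icc (0:ℝ) 1, v * Θ - R v = ∫ z in (0:ℝ)..v, (Θ + q z) := fun v hv => by
    rw [hR, intervalIntegral.integral_add intervalIntegrable_const
      (hqint.mono_set_Icc (left_mem_Icc.2 zero_le_one) hv),
      intervalIntegral.integral_const, smul_eq_mul, sub_zero, sub_neg_eq_add]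
  have hval : ∫ u, max (Θ + u) 0 ∂μ = ∫ z in (0:ℝ)..w, (Θ + q z) := by
    rw [integral_eq_setIntegral_comp_of_le_iff_cdf hq (by fun_prop),
      ← intervalIntegral_max_zero_eq_of_sign_change hgint hw hsign,
      intervalIntegral.integral_of_le zero_le_one, integral_Ioc_eq_integral_Ioo]
  rw [image_congr hobj, hval, hobj w hw]
  exact ⟨⟨⟨w, hw, rfl⟩, forall_mem_image.2 fun v hv =>
    intervalIntegral_le_of_sign_change hgint hw hsign hv⟩, rfl⟩

/-- FTPL-to-FTRL direction of the one-dimensional duality (Theorem 4 of the paper):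
a perturbation distribution with continuous strictly increasing CDF and finite first
moment induces, via R(w) = -∫₀ʷ F⁻¹(1-z) dz, a convex regularizer whose FTRL potential
equals the FTPL potential, with the maximum attained at w = 1 - F(-Θ). -/
theorem ftpl_to_ftrl_one_dim (μ : Measure ℝ) [IsProbabilityMeasure μ]
    (F Finv : ℝ → ℝ)
    (hF : ∀ x, F x = (μ (Set.Iic x)).toReal)
    (hFcont : Continuous F) (hFmono : StrictMono F)
    (hFrange : ∀ x, F x ∈ Set.Ioo (0:ℝ) 1)
    (hFinvF : ∀ x, Finv (F x) = x)
    (hFFinv : ∀ y ∈ Set.Ioo (0:ℝ) 1, F (Finv y) = y)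
    (hmoment : Integrable (fun u => |u|) μ)
    (R : ℝ → ℝ) (hR : ∀ w, R w = -∫ z in (0:ℝ)..w, Finv (1 - z)) :
    ConvexOn ℝ (Set.Icc 0 1) R ∧
      ∀ Θ : ℝ,
        IsGreatest ((fun w => w * Θ - R w) '' Set.Icc (0:ℝ) 1)
          (∫ u, max (Θ + u) 0 ∂μ) ∧
        (1 - F (-Θ)) * Θ - R (1 - F (-Θ)) = ∫ u, max (Θ + u) 0 ∂μ :=
  ftpl_to_ftrl_one_dim_general μ F Finv hF hFmono hFFinv hmoment R hR
end
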